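/- In the Lorentz sequence space d(w,1) (with w = (w_j) positive, non-increasing, w_1 = 1, w_j → 0, ∑ w_j = ∞), if V is a bounded operator satisfying sup_n ‖e_n − V e_n‖ < 1/10 for the unit vector basis (e_n), then V is not weakly compact. Consequently d(w,1) fails the W.A.P. -/

import Mathlib

open Filter Topology

/-- A set is weakly compact if it is compact in the weak topology. -/
def IsWeaklyCompact {E : Type*} [NormedAddCommGroup E] [NormedSpace ℝ E] (D : Set E) : Prop :=
  IsCompact (toWeakSpace ℝ E '' D)

/-- An operator is weakly compact if the image of the closed unit ball is relatively
compact in the weak topology. -/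
def IsWeaklyCompactOp {E F : Type*} [NormedAddCommGroup E] [NormedSpace ℝ E]
    [NormedAddCommGroup F] [NormedSpace ℝ F] (V : E →L[ℝ] F) : Prop :=
  IsCompact (closure (toWeakSpace ℝ F '' (V '' Metric.closedBall 0 1)))

/-- `E` has the W.A.P. with constant `C`. -/
def HasWAPWith (E : Type*) [NormedAddCommGroup E] [NormedSpace ℝ E] (C : ℝ) : Prop :=
  ∀ D : Set E, IsWeaklyCompact D → ∀ ε : ℝ, 0 < ε →
    ∃ V : E →L[ℝ] E, IsWeaklyCompactOp V ∧ ‖V‖ ≤ C ∧ ∀ x ∈ D, ‖x - V x‖ < ε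

/-- The Lorentz norm `∑_j w_j a_j*` of a finitely supported sequence `a`, expressed as the
supremum of `∑_{i<k} w_i |a(σ(i))|` over injections `σ`. -/
noncomputable def lorentzNorm (w : ℕ → ℝ) (a : ℕ →₀ ℝ) : ℝ :=
  sSup {r : ℝ | ∃ (k : ℕ) (σ : ℕ → ℕ), Function.Injective σ ∧
    r = ∑ i ∈ Finset.range k, w i * |a (σ i)|}


/-!
Write `z p = V e_p - e_p`, so `‖z p‖ ≤ 1/10`, and let `E j` be the coordinate functionals.
Since `(e_p)` is weakly null (`‖∑_{k<N} ±e_{m_k}‖ ≤ ∑_{i<N} w_i = o(N)`) and `E_q x → 0`, a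
gliding-hump choice of a subsequence `(n_k)` makes the off-diagonal entries `E_{n_i}(z_{n_j})`
summably small. Every Lorentz sum of `x = ∑ a_q e_q` has the form `∑_q W_q |E_q x|` with weights
`0 ≤ W_q ≤ 1`, and `∑_q W_q |E_q v| ≤ ‖v‖` for every `v`. Splitting `E_q x` into `E_q (V x)` and
`E_q (V x - x) = ∑_p a_p E_q (z_p)` then shows that `V` is bounded below on the closed span `Y`
of `(e_{n_k})`, so `V` maps `Y` isomorphically onto a closed subspace.

The flat averages `u_m = (∑_{i≤m} w_i)⁻¹ ∑_{k≤m} e_{n_k}` lie in the unit ball of `Y`, and their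
coordinates tend to `0` because `∑ w_i = ∞`. The functional `g` with `g(e_{n_k}) = w_k` has norm
at most one, and, approximating each `z_{n_j}` by a finitely supported vector, one gets
`g(V u_m) ≥ 41/50`. If `V` were weakly compact, `(V u_m)` would have a weak cluster point `V x`
with `x` a weak cluster point of `(u_m)` in `Y`; all coordinates of `x` vanish, so `x = 0`, a
contradiction. Finally `{0} ∪ {e_n}` is weakly compact, and no weakly compact operator moves all
`e_n` by less than `1/10`, so `d(w,1)` fails the W.A.P.
-/

open Finset
open Finsupp (linearCombination)

structure LorentzWeight (w : ℕ → ℝ) : Prop where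
  map_zero : w 0 = 1
  nonneg : ∀ j, 0 ≤ w j
  antitone : Antitone w

theorem LorentzWeight.le_one {w : ℕ → ℝ} (hw : LorentzWeight w) (j : ℕ) : w j ≤ 1 :=
  hw.map_zero ▸ hw.antitone (Nat.zero_le j)

theorem LorentzWeight.one_le_sum_range_succ {w : ℕ → ℝ} (hw : LorentzWeight w) (m : ℕ) :
    1 ≤ ∑ i ∈ range (m + 1), w i := by
  simpa [hw.map_zero] using single_le_sum (fun i _ => hw.nonneg i) (mem_range.2 m.succ_pos)

theorem Antitone.sum_le_sum_range_card {w : ℕ → ℝ} (hw : Antitone w) (J : Finset ℕ) :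
    ∑ i ∈ J, w i ≤ ∑ i ∈ range #J, w i := by
  induction J using Finset.induction_on_max with
  | empty => simp
  | insert M s hlt ih =>
    have hM : M ∉ s := fun h => lt_irrefl _ (hlt M h)
    have hcard : #s ≤ M := by
      simpa using card_le_card (show s ⊆ range M from fun x hx => mem_range.2 (hlt x hx))
    rw [sum_insert hM, card_insert_of_notMem hM, sum_range_succ]
    linarith [hw hcard]

theorem abs_sign_le_one (t : ℝ) : |(SignType.sign t : ℝ)| ≤ 1 := by
  cases SignType.sign t <;> simp

theorem sum_half_pow_le (G : Finset ℕ) : ∑ i ∈ G, (1 / 2 : ℝ) ^ i ≤ 2 :=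
  (summable_geometric_two.sum_le_tsum G fun _ _ => by positivity).trans_eq tsum_geometric_two

theorem sum_sum_erase_abs_le_sq {A : ℕ → ℕ → ℝ} {θ : ℕ → ℝ} (hθ : ∀ i, 0 ≤ θ i)
    (hA : ∀ i j, i ≠ j → |A i j| ≤ θ i * θ j) {γ : ℝ} (hγ : ∀ G : Finset ℕ, ∑ i ∈ G, θ i ≤ γ)
    (G : Finset ℕ) : ∑ i ∈ G, ∑ j ∈ G.erase i, |A i j| ≤ γ ^ 2 :=
  calc ∑ i ∈ G, ∑ j ∈ G.erase i, |A i j| ≤ ∑ i ∈ G, ∑ j ∈ G, θ i * θ j :=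
        sum_le_sum fun i _ => (sum_le_sum fun j hj => hA i j (ne_of_mem_erase hj).symm).trans
          (sum_le_sum_of_subset_of_nonneg (erase_subset _ _) fun j _ _ =>
            mul_nonneg (hθ i) (hθ j))
    _ = (∑ i ∈ G, θ i) ^ 2 := by rw [sq, sum_mul_sum]
    _ ≤ γ ^ 2 := pow_le_pow_left₀ (sum_nonneg fun i _ => hθ i) (hγ G) 2

theorem sum_sum_erase_abs_le_sq_of_subset_range {A : ℕ → ℕ → ℝ} {θ : ℕ → ℝ} {n : ℕ → ℕ}
    (hn : Function.Injective n) (hθ : ∀ i, 0 ≤ θ i)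
    (hA : ∀ i j, i ≠ j → |A (n i) (n j)| ≤ θ i * θ j) {γ : ℝ}
    (hγ : ∀ G : Finset ℕ, ∑ i ∈ G, θ i ≤ γ) {F : Finset ℕ} (hF : ↑F ⊆ Set.range n) :
    ∑ p ∈ F, ∑ q ∈ F.erase p, |A p q| ≤ γ ^ 2 := by
  classical
  obtain ⟨G, -, rfl⟩ := Finset.subset_set_image_iff.1 (Set.image_univ ▸ hF)
  rw [sum_image hn.injOn]
  simp_rw [← image_erase hn, sum_image hn.injOn]
  exact sum_sum_erase_abs_le_sq hθ hA hγ G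

theorem exists_strictMono_forall_lt {R : ℕ → ℕ → ℕ → Prop} (h : ∀ i a, ∀ᶠ b in atTop, R i a b) :
    ∃ n : ℕ → ℕ, StrictMono n ∧ ∀ j i, j < i → R i (n j) (n i) := by
  choose N hN using fun i a => eventually_atTop.1 (h i a)
  -- `n (i + 1)` clears the thresholds `N (i + 1) a` of all `a ≤ n i`, hence of all earlier terms.
  let n : ℕ → ℕ := fun i =>
    Nat.rec 0 (fun i m => max (m + 1) ((range (m + 1)).sup (N (i + 1)))) i
  have hsucc : ∀ i, n (i + 1) = max (n i + 1) ((range (n i + 1)).sup (N (i + 1))) := fun i => rfl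
  have hn : StrictMono n := strictMono_nat_of_lt_succ fun i => by rw [hsucc]; omega
  refine ⟨n, hn, fun j i hji => ?_⟩
  cases i with
  | zero => omega
  | succ i =>
    refine hN _ _ _ ((le_sup (mem_range.2 (Nat.lt_succ_of_le ?_))).trans
      (hsucc i ▸ le_max_right _ _))
    exact hn.monotone (Nat.le_of_lt_succ hji)

section LorentzNorm

variable {w : ℕ → ℝ}

theorem sum_mul_abs_le_of_abs_le (hw : LorentzWeight w) {a : ℕ →₀ ℝ} {t : ℝ}
    (ht : ∀ j, |a j| ≤ t) {σ : ℕ → ℕ} (hσ : Function.Injective σ) (k : ℕ) :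
    ∑ i ∈ range k, w i * |a (σ i)| ≤ t * ∑ i ∈ range #a.support, w i := by
  have ht0 : 0 ≤ t := (abs_nonneg _).trans (ht 0)
  set J := (range k).filter (fun i => σ i ∈ a.support)
  have hcard : #J ≤ #a.support :=
    card_le_card_of_injOn σ (fun i hi => (mem_filter.1 hi).2) hσ.injOn
  calc ∑ i ∈ range k, w i * |a (σ i)| = ∑ i ∈ J, w i * |a (σ i)| :=
        (sum_filter_of_ne fun i _ h => by contrapose! h; simp [Finsupp.notMem_support_iff.1 h]).symm
    _ ≤ ∑ i ∈ J, t * w i := sum_le_sum fun i _ => by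
        rw [mul_comm t]; exact mul_le_mul_of_nonneg_left (ht _) (hw.nonneg i)
    _ ≤ t * ∑ i ∈ range #J, w i := by
        rw [← mul_sum]; exact mul_le_mul_of_nonneg_left (hw.antitone.sum_le_sum_range_card J) ht0
    _ ≤ t * ∑ i ∈ range #a.support, w i :=
        mul_le_mul_of_nonneg_left (sum_le_sum_of_subset_of_nonneg (range_subset_range.2 hcard)
          fun i _ _ => hw.nonneg i) ht0

theorem bddAbove_lorentzSums (hw : LorentzWeight w) (a : ℕ →₀ ℝ) :
    BddAbove {r : ℝ | ∃ (k : ℕ) (σ : ℕ → ℕ), Function.Injective σ ∧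
      r = ∑ i ∈ range k, w i * |a (σ i)|} := by
  have h : ∀ j, |a j| ≤ ∑ i ∈ a.support, |a i| := fun j => by
    by_cases hj : j ∈ a.support
    · exact single_le_sum (fun i _ => abs_nonneg (a i)) hj
    · simpa [Finsupp.notMem_support_iff.1 hj] using sum_nonneg fun i _ => abs_nonneg (a i)
  exact ⟨_, by rintro _ ⟨k, σ, hσ, rfl⟩; exact sum_mul_abs_le_of_abs_le hw h hσ k⟩

theorem sum_le_lorentzNorm (hw : LorentzWeight w) (a : ℕ →₀ ℝ) {σ : ℕ → ℕ}
    (hσ : Function.Injective σ) (K : Finset ℕ) :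
    ∑ i ∈ K, w i * |a (σ i)| ≤ lorentzNorm w a := by
  have hK : K ⊆ range (K.sup id + 1) := fun i hi =>
    mem_range.2 (Nat.lt_succ_of_le (le_sup (f := id) hi))
  exact (sum_le_sum_of_subset_of_nonneg hK fun i _ _ =>
    mul_nonneg (hw.nonneg i) (abs_nonneg _)).trans
    (le_csSup (bddAbove_lorentzSums hw a) ⟨_, σ, hσ, rfl⟩)

theorem lorentzNorm_le {a : ℕ →₀ ℝ} {M : ℝ}
    (h : ∀ k σ, Function.Injective σ → ∑ i ∈ range k, w i * |a (σ i)| ≤ M) :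
    lorentzNorm w a ≤ M :=
  csSup_le ⟨0, 0, id, Function.injective_id, by simp⟩ (by rintro _ ⟨k, σ, hσ, rfl⟩; exact h k σ hσ)

theorem lorentzNorm_le_of_abs_le (hw : LorentzWeight w) {a : ℕ →₀ ℝ} {t : ℝ}
    (ht : ∀ j, |a j| ≤ t) : lorentzNorm w a ≤ t * ∑ i ∈ range #a.support, w i :=
  lorentzNorm_le fun k _ hσ => sum_mul_abs_le_of_abs_le hw ht hσ k

theorem abs_apply_le_lorentzNorm (hw : LorentzWeight w) (a : ℕ →₀ ℝ) (j : ℕ) :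
    |a j| ≤ lorentzNorm w a := by
  simpa [hw.map_zero] using sum_le_lorentzNorm hw a (Equiv.swap 0 j).injective {0}

end LorentzNorm

noncomputable def weightAt (w : ℕ → ℝ) (k : ℕ) (σ : ℕ → ℕ) (p : ℕ) : ℝ :=
  ∑ i ∈ range k, if σ i = p then w i else 0

section WeightAt

variable {w : ℕ → ℝ} {k : ℕ} {σ : ℕ → ℕ}

theorem sum_weightAt_mul (P : Finset ℕ) (g : ℕ → ℝ) :
    ∑ p ∈ P, weightAt w k σ p * g p = ∑ i ∈ range k, if σ i ∈ P then w i * g (σ i) else 0 := by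
  simp only [weightAt, sum_mul, ite_mul, zero_mul]
  rw [sum_comm]
  exact sum_congr rfl fun i _ => by rw [sum_ite_eq]

theorem sum_weightAt_mul_abs (a : ℕ →₀ ℝ) :
    ∑ p ∈ a.support, weightAt w k σ p * |a p| = ∑ i ∈ range k, w i * |a (σ i)| := by
  rw [sum_weightAt_mul]
  refine sum_congr rfl fun i _ => ?_
  split_ifs with h
  · rfl
  · simp [Finsupp.notMem_support_iff.1 h]

theorem weightAt_nonneg (hw : LorentzWeight w) (p : ℕ) : 0 ≤ weightAt w k σ p :=
  sum_nonneg fun i _ => by split_ifs; exacts [hw.nonneg i, le_rfl]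

theorem weightAt_le_one (hw : LorentzWeight w) (hσ : Function.Injective σ) (p : ℕ) :
    weightAt w k σ p ≤ 1 := by
  rw [weightAt, ← sum_filter]
  have hcard : #((range k).filter (σ · = p)) ≤ 1 :=
    card_le_one.2 fun i hi j hj => hσ ((mem_filter.1 hi).2.trans (mem_filter.1 hj).2.symm)
  calc ∑ i ∈ (range k).filter (σ · = p), w i ≤ #((range k).filter (σ · = p)) • (1 : ℝ) :=
        sum_le_card_nsmul _ _ _ fun i _ => hw.le_one i
    _ ≤ 1 := by simpa using (Nat.cast_le (α := ℝ)).2 hcard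

end WeightAt

section WeakCompactness

variable {E F : Type*} [NormedAddCommGroup E] [NormedSpace ℝ E] [NormedAddCommGroup F]
  [NormedSpace ℝ F]

theorem exists_dual_comp_eq {M : Type*} [AddCommGroup M] [Module ℝ M] (T : M →ₗ[ℝ] E)
    (φ : M →ₗ[ℝ] ℝ) {C : ℝ} (hC : 0 ≤ C) (hφ : ∀ a, |φ a| ≤ C * ‖T a‖) :
    ∃ Φ : StrongDual ℝ E, (∀ a, Φ (T a) = φ a) ∧ ‖Φ‖ ≤ C := by
  have hker : LinearMap.ker T ≤ LinearMap.ker φ := fun a ha => by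
    have := hφ a
    rw [LinearMap.mem_ker] at ha ⊢
    rwa [ha, norm_zero, mul_zero, abs_nonpos_iff] at this
  let ψ : LinearMap.range T →ₗ[ℝ] ℝ :=
    (LinearMap.ker T).liftQ φ hker ∘ₗ (T.quotKerEquivRange.symm : LinearMap.range T →ₗ[ℝ] _)
  have hψ : ∀ a, ψ ⟨T a, LinearMap.mem_range_self T a⟩ = φ a := fun a => by
    simp [ψ, LinearMap.quotKerEquivRange_symm_apply_image]
  have hbound : ∀ s, ‖ψ s‖ ≤ C * ‖s‖ := by
    rintro ⟨_, a, rfl⟩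
    change ‖ψ _‖ ≤ C * ‖T a‖
    simpa only [hψ, Real.norm_eq_abs] using hφ a
  obtain ⟨Φ, hΦ, hΦnorm⟩ := exists_extension_norm_eq _ (ψ.mkContinuous C hbound)
  exact ⟨Φ, fun a => (hΦ ⟨T a, _⟩).trans (hψ a),
    hΦnorm.le.trans (ψ.mkContinuous_norm_le hC hbound)⟩

theorem IsWeaklyCompactOp.exists_tendsto {V : E →L[ℝ] F} (hV : IsWeaklyCompactOp V) {ι : Type*}
    {u : ι → E} (hu : ∀ i, ‖u i‖ ≤ 1) (𝒰 : Ultrafilter ι) :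
    ∃ y : F, Tendsto (fun i => toWeakSpace ℝ F (V (u i))) 𝒰 (𝓝 (toWeakSpace ℝ F y)) := by
  obtain ⟨y, -, hy⟩ := hV.ultrafilter_le_nhds (𝒰.map fun i => toWeakSpace ℝ F (V (u i))) <| by
    rw [le_principal_iff, Ultrafilter.coe_map]
    exact mem_map.2 (univ_mem' fun i =>
      subset_closure ⟨V (u i), ⟨u i, by simpa using hu i, rfl⟩, rfl⟩)
  exact ⟨(toWeakSpace ℝ F).symm y, by simpa [Tendsto] using hy⟩

theorem Filter.Tendsto.dual_apply_of_toWeakSpace {ι : Type*} {l : Filter ι} {f : ι → F} {y : F}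
    (h : Tendsto (fun i => toWeakSpace ℝ F (f i)) l (𝓝 (toWeakSpace ℝ F y)))
    (ψ : StrongDual ℝ F) : Tendsto (fun i => ψ (f i)) l (𝓝 (ψ y)) :=
  ((WeakBilin.eval_continuous (topDualPairing ℝ F).flip ψ).tendsto _).comp h

theorem isClosed_map_of_mul_norm_le [CompleteSpace E] (V : E →L[ℝ] F) {Y : Submodule ℝ E}
    (hY : IsClosed (Y : Set E)) {c : ℝ} (hc : 0 < c) (hVY : ∀ y ∈ Y, c * ‖y‖ ≤ ‖V y‖) :
    IsClosed (Y.map (V : E →ₗ[ℝ] F) : Set F) := by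
  have : CompleteSpace Y := hY.completeSpace_coe
  have hanti : AntilipschitzWith c⁻¹.toNNReal (V.comp Y.subtypeL) :=
    AddMonoidHomClass.antilipschitz_of_bound _ fun y => by
      rw [Real.coe_toNNReal _ (inv_pos.2 hc).le, le_inv_mul_iff₀ hc]
      exact hVY y y.2
  convert hanti.isClosed_range (V.comp Y.subtypeL).uniformContinuous
  ext
  simp

theorem exists_forall_tendsto_of_isWeaklyCompactOp [CompleteSpace E] {V : E →L[ℝ] F}
    (hV : IsWeaklyCompactOp V) {Y : Submodule ℝ E} (hY : IsClosed (Y : Set E)) {c : ℝ}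
    (hc : 0 < c) (hVY : ∀ y ∈ Y, c * ‖y‖ ≤ ‖V y‖) {ι : Type*} {u : ι → E}
    (hu : ∀ i, ‖u i‖ ≤ 1) (huY : ∀ i, u i ∈ Y) (𝒰 : Ultrafilter ι) :
    ∃ x : E, ∀ φ : StrongDual ℝ E, Tendsto (fun i => φ (u i)) 𝒰 (𝓝 (φ x)) := by
  obtain ⟨y, hy⟩ := hV.exists_tendsto hu 𝒰
  set Z := Y.map (V : E →ₗ[ℝ] F)
  have hyZ : y ∈ Z := by
    have hmem : toWeakSpace ℝ F y ∈ closure (toWeakSpace ℝ F '' Z) :=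
      mem_closure_of_tendsto hy (Eventually.of_forall fun i =>
        ⟨_, Submodule.mem_map_of_mem (huY i), rfl⟩)
    rw [← Z.convex.toWeakSpace_closure ℝ, (isClosed_map_of_mul_norm_le V hY hc hVY).closure_eq]
      at hmem
    obtain ⟨y', hy', h⟩ := hmem
    rwa [(toWeakSpace ℝ F).injective h] at hy'
  obtain ⟨x, hxY, rfl⟩ := Submodule.mem_map.1 hyZ
  refine ⟨x, fun φ => ?_⟩
  obtain ⟨ψ, hψ, -⟩ := exists_dual_comp_eq ((V : E →ₗ[ℝ] F) ∘ₗ Y.subtype)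
    ((φ : E →ₗ[ℝ] ℝ) ∘ₗ Y.subtype) (C := ‖φ‖ * c⁻¹) (by positivity) fun y =>
    calc |φ y| ≤ ‖φ‖ * ‖(y : E)‖ := φ.le_opNorm y
      _ ≤ ‖φ‖ * (c⁻¹ * ‖V y‖) := by
          gcongr
          rw [le_inv_mul_iff₀ hc]
          exact hVY y y.2
      _ = _ := (mul_assoc _ _ _).symm
  convert hy.dual_apply_of_toWeakSpace ψ using 2
  · exact (hψ ⟨u _, huY _⟩).symm
  · exact (hψ ⟨x, hxY⟩).symm

theorem not_isWeaklyCompactOp_of_tendsto_coord [CompleteSpace E] {V : E →L[ℝ] F}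
    {Y : Submodule ℝ E} (hY : IsClosed (Y : Set E)) {c : ℝ} (hc : 0 < c)
    (hVY : ∀ y ∈ Y, c * ‖y‖ ≤ ‖V y‖) {ℓ : ℕ → StrongDual ℝ E}
    (hℓ : ∀ x, (∀ j, ℓ j x = 0) → x = 0) {u : ℕ → E} (hu : ∀ m, ‖u m‖ ≤ 1)
    (huY : ∀ m, u m ∈ Y) (hℓu : ∀ j, Tendsto (fun m => ℓ j (u m)) atTop (𝓝 0))
    {g : StrongDual ℝ F} {δ : ℝ} (hδ : 0 < δ) (hg : ∀ m, δ ≤ g (V (u m))) :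
    ¬ IsWeaklyCompactOp V := by
  intro hV
  obtain ⟨x, hx⟩ :=
    exists_forall_tendsto_of_isWeaklyCompactOp hV hY hc hVY hu huY (Ultrafilter.of atTop)
  have hx0 : x = 0 := hℓ x fun j =>
    tendsto_nhds_unique (hx (ℓ j)) ((hℓu j).mono_left (Ultrafilter.of_le _))
  have := ge_of_tendsto (hx (g.comp V)) (Eventually.of_forall hg)
  simp only [hx0, map_zero] at this
  linarith

theorem isWeaklyCompact_insert_zero_range {e : ℕ → E}
    (he : ∀ φ : StrongDual ℝ E, Tendsto (fun m => φ (e m)) atTop (𝓝 0)) :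
    IsWeaklyCompact (insert 0 (Set.range e)) := by
  have h : Tendsto (fun m => toWeakSpace ℝ E (e m)) atTop (𝓝 (toWeakSpace ℝ E 0)) :=
    (WeakBilin.tendsto_iff_forall_eval_tendsto _ fun x y hxy =>
      SeparatingDual.eq_iff_forall_dual_eq.2 fun φ => LinearMap.congr_fun hxy φ).2
      fun φ => (map_zero φ).symm ▸ he φ
  rw [IsWeaklyCompact, Set.image_insert_eq, ← Set.range_comp]
  exact h.isCompact_insert_range

end WeakCompactness

section LorentzSequenceSpace

variable {X : Type*} [NormedAddCommGroup X] [NormedSpace ℝ X] {w : ℕ → ℝ} {e : ℕ → X}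

theorem exists_coord_eq (hw : LorentzWeight w)
    (hnorm : ∀ a, ‖linearCombination ℝ e a‖ = lorentzNorm w a) :
    ∃ E : ℕ → StrongDual ℝ X, ∀ j a, E j (linearCombination ℝ e a) = a j := by
  choose E hE _ using fun j => exists_dual_comp_eq (linearCombination ℝ e)
    (Finsupp.lapply j) zero_le_one fun a => by simpa [hnorm] using abs_apply_le_lorentzNorm hw a j
  exact ⟨E, hE⟩

theorem sum_mul_abs_coord_le_norm (hw : LorentzWeight w)
    (hnorm : ∀ a, ‖linearCombination ℝ e a‖ = lorentzNorm w a)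
    (hdense : DenseRange (linearCombination ℝ e)) {E : ℕ → StrongDual ℝ X}
    (hE : ∀ j a, E j (linearCombination ℝ e a) = a j) {σ : ℕ → ℕ}
    (hσ : Function.Injective σ) (K : Finset ℕ) (v : X) :
    ∑ i ∈ K, w i * |E (σ i) v| ≤ ‖v‖ :=
  hdense.induction_on v (isClosed_le (by fun_prop) continuous_norm) fun a => by
    simpa only [hE, hnorm] using sum_le_lorentzNorm hw a hσ K

theorem abs_coord_le_norm (hw : LorentzWeight w)
    (hnorm : ∀ a, ‖linearCombination ℝ e a‖ = lorentzNorm w a)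
    (hdense : DenseRange (linearCombination ℝ e)) {E : ℕ → StrongDual ℝ X}
    (hE : ∀ j a, E j (linearCombination ℝ e a) = a j) (j : ℕ) (v : X) :
    |E j v| ≤ ‖v‖ := by
  simpa [hw.map_zero] using
    sum_mul_abs_coord_le_norm hw hnorm hdense hE (Equiv.swap 0 j).injective {0} v

theorem tendsto_coord_atTop_zero (hw : LorentzWeight w)
    (hnorm : ∀ a, ‖linearCombination ℝ e a‖ = lorentzNorm w a)
    (hdense : DenseRange (linearCombination ℝ e)) {E : ℕ → StrongDual ℝ X}
    (hE : ∀ j a, E j (linearCombination ℝ e a) = a j) (v : X) :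
    Tendsto (fun q => E q v) atTop (𝓝 0) := by
  refine Metric.tendsto_nhds.2 fun ε hε => ?_
  obtain ⟨a, ha⟩ := hdense.exists_dist_lt v hε
  filter_upwards [Nat.cofinite_eq_atTop ▸ a.support.eventually_cofinite_notMem] with q hq
  have hq' : E q v = E q (v - linearCombination ℝ e a) := by
    rw [map_sub, hE, Finsupp.notMem_support_iff.1 hq, sub_zero]
  rw [Real.dist_eq, sub_zero, hq']
  exact (abs_coord_le_norm hw hnorm hdense hE q _).trans_lt (by rwa [← dist_eq_norm])

theorem norm_sum_smul_le (hw : LorentzWeight w)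
    (hnorm : ∀ a, ‖linearCombination ℝ e a‖ = lorentzNorm w a) (F : Finset ℕ)
    {s : ℕ → ℝ} {t : ℝ} (ht : 0 ≤ t) (hs : ∀ m ∈ F, |s m| ≤ t) :
    ‖∑ m ∈ F, s m • e m‖ ≤ t * ∑ i ∈ range #F, w i := by
  classical
  set a : ℕ →₀ ℝ := ∑ m ∈ F, Finsupp.single m (s m)
  have ha : ∀ j, a j = if j ∈ F then s j else 0 := fun j => by
    simp [a, Finsupp.finsetSum_apply, Finsupp.single_apply]
  have hsupp : a.support ⊆ F := fun j hj => by
    by_contra h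
    simp [ha, h] at hj
  have hTa : linearCombination ℝ e a = ∑ m ∈ F, s m • e m := by simp [a, map_sum]
  rw [← hTa, hnorm]
  refine (lorentzNorm_le_of_abs_le hw (t := t) fun j => ?_).trans ?_
  · rw [ha]
    split_ifs with h
    exacts [hs j h, by simpa using ht]
  · exact mul_le_mul_of_nonneg_left (sum_le_sum_of_subset_of_nonneg
      (range_subset_range.2 (card_le_card hsupp)) fun i _ _ => hw.nonneg i) ht

theorem sum_abs_apply_le (hw : LorentzWeight w)
    (hnorm : ∀ a, ‖linearCombination ℝ e a‖ = lorentzNorm w a) (φ : StrongDual ℝ X)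
    (F : Finset ℕ) : ∑ m ∈ F, |φ (e m)| ≤ ‖φ‖ * ∑ i ∈ range #F, w i := by
  have h := norm_sum_smul_le hw hnorm F (s := fun m => SignType.sign (φ (e m))) zero_le_one
    fun m _ => abs_sign_le_one _
  calc ∑ m ∈ F, |φ (e m)| = φ (∑ m ∈ F, (SignType.sign (φ (e m)) : ℝ) • e m) := by
        simp [map_sum, sign_mul_self]
    _ ≤ ‖φ‖ * ‖∑ m ∈ F, (SignType.sign (φ (e m)) : ℝ) • e m‖ :=
        (le_abs_self _).trans (φ.le_opNorm _)
    _ ≤ ‖φ‖ * ∑ i ∈ range #F, w i := by simpa using mul_le_mul_of_nonneg_left h (norm_nonneg φ)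

theorem tendsto_apply_atTop_zero (hw : LorentzWeight w) (hw0 : Tendsto w atTop (𝓝 0))
    (hnorm : ∀ a, ‖linearCombination ℝ e a‖ = lorentzNorm w a) (φ : StrongDual ℝ X) :
    Tendsto (fun m => φ (e m)) atTop (𝓝 0) := by
  by_contra h
  rw [Metric.tendsto_nhds] at h
  push Not at h
  obtain ⟨ε, hε, hfreq⟩ := h
  simp only [Real.dist_eq, sub_zero] at hfreq
  have hinf : {m | ε ≤ |φ (e m)|}.Infinite := Nat.frequently_atTop_iff_infinite.1 hfreq
  have hbound : ∀ N : ℕ, 0 < N → ε ≤ ‖φ‖ * ((N : ℝ)⁻¹ * ∑ i ∈ range N, w i) := fun N hN => by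
    obtain ⟨F, hF, rfl⟩ := hinf.exists_subset_card_eq N
    have : (#F : ℝ) * ε ≤ ‖φ‖ * ∑ i ∈ range #F, w i := by
      calc (#F : ℝ) * ε = ∑ m ∈ F, ε := by simp
        _ ≤ ∑ m ∈ F, |φ (e m)| := sum_le_sum fun m hm => hF hm
        _ ≤ _ := sum_abs_apply_le hw hnorm φ F
    rw [← mul_assoc, mul_comm ‖φ‖, mul_assoc, le_inv_mul_iff₀ (by exact_mod_cast hN)]
    linarith
  have hlim := hw0.cesaro.const_mul ‖φ‖
  rw [mul_zero] at hlim
  linarith [ge_of_tendsto hlim (eventually_atTop.2 ⟨1, hbound⟩)]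

theorem sum_weightAt_mul_abs_coord_le (hw : LorentzWeight w)
    (hnorm : ∀ a, ‖linearCombination ℝ e a‖ = lorentzNorm w a)
    (hdense : DenseRange (linearCombination ℝ e)) {E : ℕ → StrongDual ℝ X}
    (hE : ∀ j a, E j (linearCombination ℝ e a) = a j) {σ : ℕ → ℕ}
    (hσ : Function.Injective σ) (k : ℕ) (P : Finset ℕ) (v : X) :
    ∑ p ∈ P, weightAt w k σ p * |E p v| ≤ ‖v‖ := by
  rw [sum_weightAt_mul]
  refine (sum_le_sum fun i _ => ?_).trans (sum_mul_abs_coord_le_norm hw hnorm hdense hE hσ _ v)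
  split_ifs
  exacts [le_rfl, mul_nonneg (hw.nonneg i) (abs_nonneg _)]

theorem eq_zero_of_forall_coord_eq_zero (hw : LorentzWeight w)
    (hnorm : ∀ a, ‖linearCombination ℝ e a‖ = lorentzNorm w a)
    (hdense : DenseRange (linearCombination ℝ e)) {E : ℕ → StrongDual ℝ X}
    (hE : ∀ j a, E j (linearCombination ℝ e a) = a j) {v : X} (hv : ∀ j, E j v = 0) :
    v = 0 := by
  have hle : ∀ a, ‖linearCombination ℝ e a‖ ≤ ‖linearCombination ℝ e a - v‖ :=
    fun a => by
      rw [hnorm]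
      refine lorentzNorm_le fun k σ hσ => ?_
      rw [← sum_weightAt_mul_abs]
      simpa [map_sub, hE, hv] using
        sum_weightAt_mul_abs_coord_le hw hnorm hdense hE hσ k a.support
          (linearCombination ℝ e a - v)
  by_contra h
  obtain ⟨a, ha⟩ := hdense.exists_dist_lt v (half_pos (norm_pos_iff.2 h))
  rw [dist_eq_norm] at ha
  linarith [hle a, norm_le_norm_add_norm_sub' v (linearCombination ℝ e a),
    norm_sub_rev v (linearCombination ℝ e a)]

theorem sum_weightAt_mul_abs_coord_sub_le (hw : LorentzWeight w)
    (hnorm : ∀ a, ‖linearCombination ℝ e a‖ = lorentzNorm w a)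
    (hdense : DenseRange (linearCombination ℝ e)) {E : ℕ → StrongDual ℝ X}
    (hE : ∀ j a, E j (linearCombination ℝ e a) = a j) (V : X →L[ℝ] X) {α β : ℝ}
    (hα : ∀ p, ‖V (e p) - e p‖ ≤ α) {a : ℕ →₀ ℝ}
    (hβ : ∑ p ∈ a.support, ∑ q ∈ a.support.erase p, |E p (V (e q) - e q)| ≤ β)
    {σ : ℕ → ℕ} (hσ : Function.Injective σ) (k : ℕ) :
    ∑ p ∈ a.support, weightAt w k σ p *
        |E p (V (linearCombination ℝ e a) - linearCombination ℝ e a)| ≤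
      (α + β) * ‖linearCombination ℝ e a‖ := by
  set x := linearCombination ℝ e a
  set z : ℕ → X := fun q => V (e q) - e q
  have hVx : V x - x = ∑ q ∈ a.support, a q • z q := by
    simp [x, z, Finsupp.linearCombination_apply, Finsupp.sum, map_sum, smul_sub, sum_sub_distrib]
  have hcoord : ∀ p ∈ a.support,
      |E p (V x - x)| ≤ α * |a p| + ∑ q ∈ a.support.erase p, |a q| * |E p (z q)| := fun p hp => by
    rw [hVx, map_sum, ← add_sum_erase _ _ hp]
    refine (abs_add_le _ _).trans (add_le_add ?_ ((abs_sum_le_sum_abs _ _).trans_eq ?_))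
    · rw [map_smul, smul_eq_mul, abs_mul, mul_comm α]
      exact mul_le_mul_of_nonneg_left ((abs_coord_le_norm hw hnorm hdense hE p _).trans (hα p))
        (abs_nonneg _)
    · simp [abs_mul]
  have hax : ∀ q, |a q| ≤ ‖x‖ := fun q => (abs_apply_le_lorentzNorm hw a q).trans_eq (hnorm a).symm
  have hWa : ∑ p ∈ a.support, weightAt w k σ p * |a p| ≤ ‖x‖ := by
    rw [sum_weightAt_mul_abs, hnorm]
    exact sum_le_lorentzNorm hw a hσ _
  calc ∑ p ∈ a.support, weightAt w k σ p * |E p (V x - x)|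
      ≤ ∑ p ∈ a.support, (α * (weightAt w k σ p * |a p|) +
          ∑ q ∈ a.support.erase p, ‖x‖ * |E p (z q)|) := sum_le_sum fun p hp => by
        refine (mul_le_mul_of_nonneg_left (hcoord p hp) (weightAt_nonneg hw p)).trans ?_
        rw [mul_add, mul_left_comm]
        refine add_le_add le_rfl ((mul_le_of_le_one_left (sum_nonneg fun q _ => by positivity)
          (weightAt_le_one hw hσ p)).trans (sum_le_sum fun q _ => ?_))
        exact mul_le_mul_of_nonneg_right (hax q) (abs_nonneg _)
    _ = α * ∑ p ∈ a.support, weightAt w k σ p * |a p| +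
          ‖x‖ * ∑ p ∈ a.support, ∑ q ∈ a.support.erase p, |E p (z q)| := by
        simp only [sum_add_distrib, mul_sum]
    _ ≤ α * ‖x‖ + ‖x‖ * β := by
        gcongr
        exact (norm_nonneg _).trans (hα 0)
    _ = (α + β) * ‖x‖ := by ring

theorem mul_norm_le_norm_apply (hw : LorentzWeight w)
    (hnorm : ∀ a, ‖linearCombination ℝ e a‖ = lorentzNorm w a)
    (hdense : DenseRange (linearCombination ℝ e)) {E : ℕ → StrongDual ℝ X}
    (hE : ∀ j a, E j (linearCombination ℝ e a) = a j) (V : X →L[ℝ] X) {α β : ℝ}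
    (hα : ∀ p, ‖V (e p) - e p‖ ≤ α) {S : Set ℕ}
    (hβ : ∀ F : Finset ℕ, ↑F ⊆ S → ∑ p ∈ F, ∑ q ∈ F.erase p, |E p (V (e q) - e q)| ≤ β)
    {a : ℕ →₀ ℝ} (ha : ↑a.support ⊆ S) :
    (1 - α - β) * ‖linearCombination ℝ e a‖ ≤ ‖V (linearCombination ℝ e a)‖ := by
  set x := linearCombination ℝ e a
  suffices h : lorentzNorm w a ≤ ‖V x‖ + (α + β) * ‖x‖ by rw [← hnorm] at h; linarith
  refine lorentzNorm_le fun k σ hσ => ?_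
  calc ∑ i ∈ range k, w i * |a (σ i)| = ∑ p ∈ a.support, weightAt w k σ p * |E p x| := by
        simp [x, hE, sum_weightAt_mul_abs]
    _ ≤ ∑ p ∈ a.support, weightAt w k σ p * |E p (V x)| +
          ∑ p ∈ a.support, weightAt w k σ p * |E p (V x - x)| := by
        rw [← sum_add_distrib]
        refine sum_le_sum fun p _ => ?_
        rw [← mul_add]
        exact mul_le_mul_of_nonneg_left (by simpa using abs_sub (E p (V x)) (E p (V x - x)))
          (weightAt_nonneg hw p)
    _ ≤ ‖V x‖ + (α + β) * ‖x‖ := add_le_add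
        (sum_weightAt_mul_abs_coord_le hw hnorm hdense hE hσ k _ _)
        (sum_weightAt_mul_abs_coord_sub_le hw hnorm hdense hE V hα (hβ _ ha) hσ k)

theorem mul_norm_le_norm_apply_of_mem_closure (hw : LorentzWeight w)
    (hnorm : ∀ a, ‖linearCombination ℝ e a‖ = lorentzNorm w a)
    (hdense : DenseRange (linearCombination ℝ e)) {E : ℕ → StrongDual ℝ X}
    (hE : ∀ j a, E j (linearCombination ℝ e a) = a j) (V : X →L[ℝ] X) {α β : ℝ}
    (hα : ∀ p, ‖V (e p) - e p‖ ≤ α) {S : Set ℕ}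
    (hβ : ∀ F : Finset ℕ, ↑F ⊆ S → ∑ p ∈ F, ∑ q ∈ F.erase p, |E p (V (e q) - e q)| ≤ β)
    {y : X} (hy : y ∈ (Submodule.span ℝ (e '' S)).topologicalClosure) :
    (1 - α - β) * ‖y‖ ≤ ‖V y‖ := by
  rw [← SetLike.mem_coe, Submodule.topologicalClosure_coe] at hy
  refine closure_minimal (t := {y | (1 - α - β) * ‖y‖ ≤ ‖V y‖}) (fun y hy => ?_)
    (isClosed_le (by fun_prop) (by fun_prop)) hy
  obtain ⟨a, ha, rfl⟩ := (Finsupp.mem_span_image_iff_linearCombination ℝ).1 hy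
  exact mul_norm_le_norm_apply hw hnorm hdense hE V hα hβ ((Finsupp.mem_supported ℝ a).1 ha)

theorem exists_strictMono_abs_coord_le (hw : LorentzWeight w) (hw0 : Tendsto w atTop (𝓝 0))
    (hnorm : ∀ a, ‖linearCombination ℝ e a‖ = lorentzNorm w a)
    (hdense : DenseRange (linearCombination ℝ e)) {E : ℕ → StrongDual ℝ X}
    (hE : ∀ j a, E j (linearCombination ℝ e a) = a j) (V : X →L[ℝ] X) {θ : ℕ → ℝ}
    (hθ : Antitone θ) (hθpos : ∀ i, 0 < θ i) (B : ℕ → ℕ →₀ ℝ) :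
    ∃ n : ℕ → ℕ, StrictMono n ∧
      (∀ i j, i ≠ j → |E (n i) (V (e (n j)) - e (n j))| ≤ θ i * θ j) ∧
      ∀ j k, j < k → B (n j) (n k) = 0 := by
  have small : ∀ {f : ℕ → ℝ}, Tendsto f atTop (𝓝 0) → ∀ i, ∀ᶠ b in atTop, |f b| ≤ θ i ^ 2 :=
    fun hf i => (Metric.tendsto_nhds.1 hf _ (pow_pos (hθpos i) 2)).mono fun b hb => by
      rw [Real.dist_eq, sub_zero] at hb
      exact hb.le
  have hz : ∀ a, Tendsto (fun b => E a (V (e b) - e b)) atTop (𝓝 0) := fun a => by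
    simpa using (tendsto_apply_atTop_zero hw hw0 hnorm ((E a).comp V)).sub
      (tendsto_apply_atTop_zero hw hw0 hnorm (E a))
  obtain ⟨n, hn, hR⟩ := exists_strictMono_forall_lt
    (R := fun i a b => (B a).support.sup id < b ∧ |E a (V (e b) - e b)| ≤ θ i ^ 2 ∧
      |E b (V (e a) - e a)| ≤ θ i ^ 2) fun i a =>
    (eventually_gt_atTop _).and ((small (hz a) i).and
      (small (tendsto_coord_atTop_zero hw hnorm hdense hE _) i))
  refine ⟨n, hn, fun i j hij => ?_, fun j k hjk => ?_⟩
  · rcases hij.lt_or_gt with h | h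
    · exact (hR i j h).2.1.trans (by
        rw [sq]; exact mul_le_mul_of_nonneg_right (hθ h.le) (hθpos j).le)
    · exact (hR j i h).2.2.trans (by
        rw [sq]; exact mul_le_mul_of_nonneg_left (hθ h.le) (hθpos i).le)
  · exact Finsupp.notMem_support_iff.1 fun hmem =>
      (le_sup (f := id) hmem).not_gt (hR j k hjk).1

noncomputable def flatAverage (w : ℕ → ℝ) (e : ℕ → X) (n : ℕ → ℕ) (m : ℕ) : X :=
  (∑ i ∈ range (m + 1), w i)⁻¹ • ∑ k ∈ range (m + 1), e (n k)

theorem flatAverage_eq_sum_image {n : ℕ → ℕ} (hn : Function.Injective n) (m : ℕ) :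
    flatAverage w e n m =
      ∑ p ∈ (range (m + 1)).image n, (∑ i ∈ range (m + 1), w i)⁻¹ • e p := by
  rw [flatAverage, smul_sum, sum_image hn.injOn]

theorem flatAverage_mem_span (n : ℕ → ℕ) (m : ℕ) :
    flatAverage w e n m ∈ Submodule.span ℝ (e '' Set.range n) :=
  Submodule.smul_mem _ _ (Submodule.sum_mem _ fun k _ => Submodule.subset_span ⟨n k, ⟨k, rfl⟩, rfl⟩)

theorem norm_flatAverage_le (hw : LorentzWeight w)
    (hnorm : ∀ a, ‖linearCombination ℝ e a‖ = lorentzNorm w a) {n : ℕ → ℕ}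
    (hn : Function.Injective n) (m : ℕ) : ‖flatAverage w e n m‖ ≤ 1 := by
  have hS : 0 < ∑ i ∈ range (m + 1), w i := zero_lt_one.trans_le (hw.one_le_sum_range_succ m)
  rw [flatAverage_eq_sum_image hn]
  refine (norm_sum_smul_le hw hnorm _ (inv_nonneg.2 hS.le) fun _ _ => le_of_eq ?_).trans_eq ?_
  · exact abs_of_nonneg (inv_nonneg.2 hS.le)
  · rw [card_image_of_injective _ hn, card_range, inv_mul_cancel₀ hS.ne']

theorem tendsto_coord_flatAverage (hw : LorentzWeight w) (hwdiv : ¬ Summable w)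
    {E : ℕ → StrongDual ℝ X} (hE : ∀ j a, E j (linearCombination ℝ e a) = a j)
    {n : ℕ → ℕ} (hn : Function.Injective n) (j : ℕ) :
    Tendsto (fun m => E j (flatAverage w e n m)) atTop (𝓝 0) := by
  have he : ∀ p, E j (e p) = if p = j then 1 else 0 := fun p => by
    simpa [Finsupp.single_apply] using hE j (Finsupp.single p 1)
  have hcoord : ∀ m, ‖E j (flatAverage w e n m)‖ ≤ (∑ i ∈ range (m + 1), w i)⁻¹ := fun m => by
    have hS := zero_lt_one.trans_le (hw.one_le_sum_range_succ m)
    rw [flatAverage_eq_sum_image hn, map_sum]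
    simp only [map_smul, smul_eq_mul, he, mul_ite, mul_one, mul_zero, sum_ite_eq']
    split_ifs <;> simp [abs_of_pos hS, hS.le]
  have hS : Tendsto (fun m => ∑ i ∈ range (m + 1), w i) atTop atTop :=
    ((not_summable_iff_tendsto_nat_atTop_of_nonneg hw.nonneg).1 hwdiv).comp
      (tendsto_add_atTop_nat 1)
  exact squeeze_zero_norm hcoord hS.inv_tendsto_atTop

theorem exists_dual_apply_eq_weight (hw : LorentzWeight w)
    (hnorm : ∀ a, ‖linearCombination ℝ e a‖ = lorentzNorm w a) {n : ℕ → ℕ}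
    (hn : Function.Injective n) :
    ∃ g : StrongDual ℝ X, ‖g‖ ≤ 1 ∧ (∀ k, g (e (n k)) = w k) ∧
      ∀ (b : ℕ →₀ ℝ) (K : Finset ℕ), (∀ k ∉ K, b (n k) = 0) →
        |g (linearCombination ℝ e b)| ≤ ∑ k ∈ K, w k * |b (n k)| := by
  let φ : (ℕ →₀ ℝ) →ₗ[ℝ] ℝ := Finsupp.linearCombination ℝ w ∘ₗ Finsupp.lcomapDomain n hn
  have hφ : ∀ (b : ℕ →₀ ℝ) (K : Finset ℕ), (∀ k ∉ K, b (n k) = 0) →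
      |φ b| ≤ ∑ k ∈ K, w k * |b (n k)| := fun b K hK => by
    have hsupp : (Finsupp.comapDomain n b hn.injOn).support ⊆ K := fun k hk => by
      by_contra h
      exact Finsupp.mem_support_iff.1 hk (by simp [Finsupp.comapDomain_apply, hK k h])
    have : φ b = ∑ k ∈ K, b (n k) * w k := by
      simp only [φ, LinearMap.comp_apply, Finsupp.lcomapDomain_apply,
        Finsupp.linearCombination_apply]
      rw [Finsupp.sum_of_support_subset _ hsupp _ (by simp)]
      simp [Finsupp.comapDomain_apply]
    rw [this]
    exact (abs_sum_le_sum_abs _ _).trans_eq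
      (sum_congr rfl fun k _ => by rw [abs_mul, abs_of_nonneg (hw.nonneg k), mul_comm])
  obtain ⟨g, hg, hg1⟩ := exists_dual_comp_eq (linearCombination ℝ e) φ zero_le_one
    fun b => by
      rw [one_mul, hnorm]
      refine (hφ b (Finsupp.comapDomain n b hn.injOn).support fun k hk => ?_).trans
        (sum_le_lorentzNorm hw b hn _)
      simpa [Finsupp.comapDomain_apply] using Finsupp.notMem_support_iff.1 hk
  refine ⟨g, hg1, fun k => ?_, fun b K hK => hg b ▸ hφ b K hK⟩
  have : e (n k) = linearCombination ℝ e (Finsupp.single (n k) 1) := by simp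
  rw [this, hg]
  simp [φ, Finsupp.comapDomain_single]

theorem abs_dual_apply_le (hw : LorentzWeight w)
    (hnorm : ∀ a, ‖linearCombination ℝ e a‖ = lorentzNorm w a)
    (hdense : DenseRange (linearCombination ℝ e)) {E : ℕ → StrongDual ℝ X}
    (hE : ∀ j a, E j (linearCombination ℝ e a) = a j) {n : ℕ → ℕ}
    (hn : Function.Injective n) {g : StrongDual ℝ X} (hg1 : ‖g‖ ≤ 1)
    (hgK : ∀ (b : ℕ →₀ ℝ) (K : Finset ℕ), (∀ k ∉ K, b (n k) = 0) →
      |g (linearCombination ℝ e b)| ≤ ∑ k ∈ K, w k * |b (n k)|)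
    (v : X) {b : ℕ →₀ ℝ} {j : ℕ} (hb : ∀ k, j < k → b (n k) = 0) :
    |g v| ≤ ∑ k ∈ range (j + 1), w k * |E (n k) v| +
      2 * ‖linearCombination ℝ e b - v‖ := by
  set d := linearCombination ℝ e b - v
  have hgb := hgK b (range (j + 1)) fun k hk => hb k (by simpa using hk)
  have hcoord : ∑ k ∈ range (j + 1), w k * |b (n k)| ≤
      ∑ k ∈ range (j + 1), w k * |E (n k) v| + ‖d‖ :=
    calc ∑ k ∈ range (j + 1), w k * |b (n k)|
        = ∑ k ∈ range (j + 1), w k * |E (n k) v + E (n k) d| := by simp [d, hE]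
      _ ≤ ∑ k ∈ range (j + 1), (w k * |E (n k) v| + w k * |E (n k) d|) :=
          sum_le_sum fun k _ => by
            rw [← mul_add]; exact mul_le_mul_of_nonneg_left (abs_add_le _ _) (hw.nonneg k)
      _ ≤ _ := by
          rw [sum_add_distrib]
          gcongr
          exact sum_mul_abs_coord_le_norm hw hnorm hdense hE hn _ d
  have hgd : |g d| ≤ ‖d‖ := (g.le_opNorm d).trans (mul_le_of_le_one_left (norm_nonneg d) hg1)
  have hsplit : g v = g (linearCombination ℝ e b) - g d := by simp [d]
  rw [hsplit]
  linarith [abs_sub (g (linearCombination ℝ e b)) (g d)]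

theorem one_sub_le_apply_flatAverage (hw : LorentzWeight w) {g : StrongDual ℝ X} (V : X →L[ℝ] X)
    {n : ℕ → ℕ} (hge : ∀ k, g (e (n k)) = w k) {α γ : ℝ} {c : ℕ → ℝ}
    (hg : ∀ j, |g (V (e (n j)) - e (n j))| ≤ α * w j + c j)
    (hc : ∀ m, ∑ j ∈ range (m + 1), c j ≤ γ) (hγ : 0 ≤ γ) (m : ℕ) :
    1 - α - γ ≤ g (V (flatAverage w e n m)) := by
  set S := ∑ i ∈ range (m + 1), w i
  have hS : 1 ≤ S := hw.one_le_sum_range_succ m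
  have hsum : ∑ k ∈ range (m + 1), g (V (e (n k))) =
      S + ∑ k ∈ range (m + 1), g (V (e (n k)) - e (n k)) := by
    simp [S, map_sub, hge]
  have hz : -(α * S + γ) ≤ ∑ k ∈ range (m + 1), g (V (e (n k)) - e (n k)) := by
    refine neg_le.1 ((neg_le_abs _).trans ((abs_sum_le_sum_abs _ _).trans ?_))
    calc ∑ k ∈ range (m + 1), |g (V (e (n k)) - e (n k))|
        ≤ ∑ k ∈ range (m + 1), (α * w k + c k) := sum_le_sum fun k _ => hg k
      _ ≤ α * S + γ := by rw [sum_add_distrib, ← mul_sum]; linarith [hc m]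
  rw [flatAverage, map_smul, map_sum, map_smul, map_sum, smul_eq_mul, hsum, inv_mul_eq_div,
    le_div_iff₀ (zero_lt_one.trans_le hS)]
  nlinarith [mul_le_mul_of_nonneg_left hS hγ]

theorem exists_dual_le_apply_flatAverage (hw : LorentzWeight w)
    (hnorm : ∀ a, ‖linearCombination ℝ e a‖ = lorentzNorm w a)
    (hdense : DenseRange (linearCombination ℝ e)) {E : ℕ → StrongDual ℝ X}
    (hE : ∀ j a, E j (linearCombination ℝ e a) = a j) (V : X →L[ℝ] X) {α β η₀ : ℝ}
    (hα : ∀ p, ‖V (e p) - e p‖ ≤ α) {n : ℕ → ℕ} (hn : Function.Injective n)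
    (hβ : ∀ m, ∑ j ∈ range (m + 1), ∑ k ∈ range j, |E (n k) (V (e (n j)) - e (n j))| ≤ β)
    {B : ℕ → ℕ →₀ ℝ} (hB : ∀ j k, j < k → B (n j) (n k) = 0) {η : ℕ → ℝ}
    (hη : ∀ p, ‖linearCombination ℝ e (B p) - (V (e p) - e p)‖ ≤ η p)
    (hη₀ : ∀ m, ∑ j ∈ range (m + 1), η (n j) ≤ η₀) :
    ∃ g : StrongDual ℝ X, ∀ m, 1 - α - (β + 2 * η₀) ≤ g (V (flatAverage w e n m)) := by
  obtain ⟨g, hg1, hge, hgK⟩ := exists_dual_apply_eq_weight hw hnorm hn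
  refine ⟨g, one_sub_le_apply_flatAverage hw V hge
    (c := fun j => ∑ k ∈ range j, |E (n k) (V (e (n j)) - e (n j))| + 2 * η (n j))
    (fun j => ?_) (fun m => ?_) ?_⟩
  · set z := V (e (n j)) - e (n j)
    have hgz := abs_dual_apply_le hw hnorm hdense hE hn hg1 hgK z (hB j)
    rw [sum_range_succ] at hgz
    have hdiag : w j * |E (n j) z| ≤ α * w j := by
      rw [mul_comm α]
      exact mul_le_mul_of_nonneg_left ((abs_coord_le_norm hw hnorm hdense hE _ z).trans (hα _))
        (hw.nonneg j)
    have hoff : ∑ k ∈ range j, w k * |E (n k) z| ≤ ∑ k ∈ range j, |E (n k) z| :=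
      sum_le_sum fun k _ => mul_le_of_le_one_left (abs_nonneg _) (hw.le_one k)
    linarith [hη (n j)]
  · rw [sum_add_distrib, ← mul_sum]
    linarith [hβ m, hη₀ m]
  · have hβ0 : 0 ≤ β := by simpa using hβ 0
    have hη0 : η (n 0) ≤ η₀ := by simpa using hη₀ 0
    linarith [(norm_nonneg _).trans (hη (n 0))]

theorem not_isWeaklyCompactOp [CompleteSpace X] (hw : LorentzWeight w)
    (hw0 : Tendsto w atTop (𝓝 0)) (hwdiv : ¬ Summable w)
    (hnorm : ∀ a, ‖linearCombination ℝ e a‖ = lorentzNorm w a)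
    (hdense : DenseRange (linearCombination ℝ e)) (V : X →L[ℝ] X)
    (hV : ∀ p, ‖V (e p) - e p‖ ≤ 1 / 10) : ¬ IsWeaklyCompactOp V := by
  obtain ⟨E, hE⟩ := exists_coord_eq hw hnorm
  -- The entries `E (n i) (z (n j))`, `i ≠ j`, are at most `θ i * θ j` with `θ i = 2⁻ⁱ / 10`, so
  -- their total is at most `(1/5)^2`; `B p` approximates `z p` within `2⁻ᵖ / 100`.
  have hθ : Antitone fun i : ℕ => (1 / 2 : ℝ) ^ i / 10 := fun i j hij =>
    div_le_div_of_nonneg_right (pow_le_pow_of_le_one (by norm_num) (by norm_num) hij) (by norm_num)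
  have hθsum : ∀ G : Finset ℕ, ∑ i ∈ G, (1 / 2 : ℝ) ^ i / 10 ≤ 1 / 5 := fun G => by
    rw [← sum_div]; linarith [sum_half_pow_le G]
  choose B hB using fun p => hdense.exists_dist_lt (V (e p) - e p)
    (show 0 < (1 / 2 : ℝ) ^ p / 100 by positivity)
  obtain ⟨n, hn, hcross, hB0⟩ :=
    exists_strictMono_abs_coord_le hw hw0 hnorm hdense hE V hθ (fun i => by positivity) B
  obtain ⟨g, hg⟩ := exists_dual_le_apply_flatAverage hw hnorm hdense hE V hV hn.injective
    (fun m => (sum_le_sum fun j hj => sum_le_sum_of_subset_of_nonneg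
        (fun k hk => mem_erase.2 ⟨(mem_range.1 hk).ne, mem_range.2 ((mem_range.1 hk).trans
          (mem_range.1 hj))⟩) fun _ _ _ => abs_nonneg _).trans
      (sum_sum_erase_abs_le_sq (A := fun j k => E (n k) (V (e (n j)) - e (n j)))
        (fun i => by positivity) (fun j k h => (hcross k j h.symm).trans_eq (mul_comm _ _))
        hθsum _))
    hB0 (η := fun p => (1 / 2 : ℝ) ^ p / 100)
    (fun p => by rw [← dist_eq_norm, dist_comm]; exact (hB p).le) (η₀ := 1 / 50) fun m => by
      rw [← sum_div, ← sum_image (f := fun p => (1 / 2 : ℝ) ^ p) hn.injective.injOn]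
      linarith [sum_half_pow_le ((range (m + 1)).image n)]
  exact not_isWeaklyCompactOp_of_tendsto_coord (Submodule.isClosed_topologicalClosure _)
    (by norm_num : (0 : ℝ) < 1 - 1 / 10 - (1 / 5) ^ 2)
    (fun y hy => mul_norm_le_norm_apply_of_mem_closure hw hnorm hdense hE V hV
      (fun F hF => sum_sum_erase_abs_le_sq_of_subset_range hn.injective
        (fun i => by positivity) hcross hθsum hF) hy)
    (fun x => eq_zero_of_forall_coord_eq_zero hw hnorm hdense hE)
    (norm_flatAverage_le hw hnorm hn.injective)
    (fun m => Submodule.le_topologicalClosure _ (flatAverage_mem_span n m))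
    (tendsto_coord_flatAverage hw hwdiv hE hn.injective)
    (by norm_num : (0 : ℝ) < 1 - 1 / 10 - ((1 / 5) ^ 2 + 2 * (1 / 50))) hg

end LorentzSequenceSpace

/-- Example 6.12 of Odell–Tylli.  Let `w` be a positive non-increasing weight sequence
with `w_0 = 1`, `w_j → 0` and `∑ w_j = ∞`, and let `X` be the Lorentz sequence space
`d(w,1)`: the Banach space generated by the unit vector basis `(e_n)` in which finitely
supported vectors `∑ a_j e_j` carry the Lorentz norm.  If `V` is a bounded operator on
`X` with `sup_n ‖e_n - V e_n‖ < 1/10`, then `V` is not weakly compact.  Consequently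
`d(w,1)` fails the W.A.P. -/
theorem stmt_16 (w : ℕ → ℝ) (hw1 : w 0 = 1) (hwpos : ∀ j, 0 < w j) (hwmono : Antitone w)
    (hw0 : Filter.Tendsto w Filter.atTop (nhds 0)) (hwdiv : ¬ Summable w)
    {X : Type*} [NormedAddCommGroup X] [NormedSpace ℝ X] [CompleteSpace X]
    (e : ℕ → X)
    (hnorm : ∀ a : ℕ →₀ ℝ, ‖a.sum fun j c => c • e j‖ = lorentzNorm w a)
    (hdense : DenseRange fun a : ℕ →₀ ℝ => a.sum fun j c => c • e j) :
    (∀ V : X →L[ℝ] X, (∀ n, ‖e n - V (e n)‖ < 1/10) → ¬ IsWeaklyCompactOp V) ∧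
      ¬ ∃ C : ℝ, HasWAPWith X C := by
  have hw : LorentzWeight w := ⟨hw1, fun j => (hwpos j).le, hwmono⟩
  have hT : ∀ a : ℕ →₀ ℝ, (a.sum fun j c => c • e j) = linearCombination ℝ e a :=
    fun a => (Finsupp.linearCombination_apply ℝ a).symm
  simp only [hT] at hnorm hdense
  have hV : ∀ V : X →L[ℝ] X, (∀ n, ‖e n - V (e n)‖ < 1/10) → ¬ IsWeaklyCompactOp V :=
    fun V hV => not_isWeaklyCompactOp hw hw0 hwdiv hnorm hdense V fun p => by
      rw [norm_sub_rev]; exact (hV p).le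
  refine ⟨hV, fun ⟨C, hC⟩ => ?_⟩
  obtain ⟨V, hVwc, -, hVe⟩ := hC _ (isWeaklyCompact_insert_zero_range
    (tendsto_apply_atTop_zero hw hw0 hnorm)) (1 / 10) (by norm_num)
  exact hV V (fun p => hVe _ (Set.mem_insert_of_mem _ ⟨p, rfl⟩)) hVwc
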